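/- Let z₁, z₂, z₃, z₄ and z₁′, z₂′, z₃′, z₄′ be two quadruples of nonzero null vectors in ℂ^{3,1}, each quadruple having no two members that are complex multiples of one another. Set 𝕏₁ = 𝕏(z₁,z₂,z₃,z₄), 𝕏₂ = 𝕏(z₁,z₃,z₂,z₄), 𝕏₃ = 𝕏(z₂,z₃,z₁,z₄), and define 𝕏₁′, 𝕏₂′, 𝕏₃′ analogously from the primed quadruple. Assume 𝕏₁, 𝕏₂, 𝕏₃ are all non-real and 𝕏_i′ = 𝕏_i for i = 1, 2, 3. Then there exist A ∈ SU(3,1) and nonzero complex numbers λ₁, λ₂, λ₃, λ₄ such that A·z_j = λ_j·z_j′ for j = 1, 2, 3, 4. -/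

import Mathlib

open Complex ComplexConjugate Matrix Polynomial

noncomputable section

abbrev Vec4 := Fin 4 → ℂ
abbrev Mat4 := Matrix (Fin 4) (Fin 4) ℂ

/-- The Hermitian form of signature (3,1):
`⟨z,w⟩ = z₁·conj(w₄) + z₂·conj(w₂) + z₃·conj(w₃) + z₄·conj(w₁)`. -/
def hermForm (z w : Vec4) : ℂ :=
  z 0 * conj (w 3) + z 1 * conj (w 1) + z 2 * conj (w 2) + z 3 * conj (w 0)

/-- The matrix of the Hermitian form. -/
def Hmat : Mat4 := !![0,0,0,1; 0,1,0,0; 0,0,1,0; 1,0,0,0]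

/-- `A ∈ SU(3,1)`: `(conj A)ᵀ H A = H` and `det A = 1`. -/
def isSU31 (A : Mat4) : Prop := Aᴴ * Hmat * A = Hmat ∧ A.det = 1

/-- Koranyi-Riemann cross-ratio. -/
def crossRatio (z1 z2 z3 z4 : Vec4) : ℂ :=
  (hermForm z3 z1 * hermForm z4 z2) / (hermForm z4 z1 * hermForm z3 z2)

/-- No two of the four vectors are complex multiples of one another. -/
def PairwiseNotProp4 (z1 z2 z3 z4 : Vec4) : Prop :=
  (∀ c : ℂ, z1 ≠ c • z2) ∧ (∀ c : ℂ, z1 ≠ c • z3) ∧ (∀ c : ℂ, z1 ≠ c • z4) ∧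
  (∀ c : ℂ, z2 ≠ c • z3) ∧ (∀ c : ℂ, z2 ≠ c • z4) ∧ (∀ c : ℂ, z3 ≠ c • z4)

/-- `u` is a nonzero complex multiple of `v`. -/
def PropNZ (u v : Vec4) : Prop := ∃ c : ℂ, c ≠ 0 ∧ u = c • v

/-- A loxodromic element of SU(3,1), equipped with its eigen-data. -/
structure Lox where
  M : Mat4
  hM : isSU31 M
  r : ℝ
  θ : ℝ
  φ : ℝ
  hr : 1 < r
  a : Vec4
  x : Vec4
  y : Vec4
  rp : Vec4
  hbasis : LinearIndependent ℂ ![a, x, y, rp]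
  ha : M.mulVec a = ((r : ℂ) * Complex.exp ((θ : ℂ) * Complex.I)) • a
  hx : M.mulVec x = Complex.exp ((φ : ℂ) * Complex.I) • x
  hy : M.mulVec y = Complex.exp (-(2*(θ : ℂ)+(φ : ℂ)) * Complex.I) • y
  hrp : M.mulVec rp = ((r : ℂ)⁻¹ * Complex.exp ((θ : ℂ) * Complex.I)) • rp
  hnull_a : hermForm a a = 0
  hnull_r : hermForm rp rp = 0
  hx1 : hermForm x x = 1
  hy1 : hermForm y y = 1

/-- Goldman's eta invariant `η(a,r;x)` for null `a`, `r` and positive `x`. -/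
def etaV (aA rA xB : Vec4) : ℂ :=
  (hermForm aA xB * hermForm xB rA) / (hermForm aA rA * hermForm xB xB)

def eta1 (A B : Lox) : ℂ := etaV A.a A.rp B.x
def eta2 (A B : Lox) : ℂ := etaV A.a A.rp B.y
def nu1 (A B : Lox) : ℂ := etaV B.a B.rp A.x
def nu2 (A B : Lox) : ℂ := etaV B.a B.rp A.y

def X1 (A B : Lox) : ℂ := crossRatio B.a A.a A.rp B.rp
def X2 (A B : Lox) : ℂ := crossRatio B.a A.rp A.a B.rp
def X3 (A B : Lox) : ℂ := crossRatio A.a A.rp B.a B.rp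

def alpha1 (A B : Lox) : ℂ := crossRatio A.rp A.a B.x B.a
def alpha2 (A B : Lox) : ℂ := crossRatio A.rp A.a B.y B.a
def beta1 (A B : Lox) : ℂ := crossRatio B.rp B.a A.x A.a
def beta2 (A B : Lox) : ℂ := crossRatio B.rp B.a A.y A.a

def etaIdx (i : Fin 2) (A B : Lox) : ℂ := if i = 0 then eta1 A B else eta2 A B
def nuIdx (j : Fin 2) (A B : Lox) : ℂ := if j = 0 then nu1 A B else nu2 A B
def alphaIdx (i : Fin 2) (A B : Lox) : ℂ := if i = 0 then alpha1 A B else alpha2 A B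
def betaIdx (j : Fin 2) (A B : Lox) : ℂ := if j = 0 then beta1 A B else beta2 A B

/-- Non-singularity of the eigen-data of a pair of loxodromic elements. -/
def NonSingularV (aA xA yA rA aB xB yB rB : Vec4) : Prop :=
  PairwiseNotProp4 aA rA aB rB ∧
  LinearIndependent ℂ ![aA, rA, aB, rB] ∧
  (etaV aA rA xB ≠ 0 ∨ etaV aA rA yB ≠ 0) ∧
  (etaV aB rB xA ≠ 0 ∨ etaV aB rB yA ≠ 0)

/-- The pair `(A,B)` of loxodromic elements is non-singular. -/
def NonSingular (A B : Lox) : Prop :=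
  NonSingularV A.a A.x A.y A.rp B.a B.x B.y B.rp

/-- trace. -/
def tau (A : Mat4) : ℂ := A.trace

/-- `σ_A = (tr(A)² − tr(A²))/2`. -/
def sigma (A : Mat4) : ℂ := ((A.trace)^2 - (A^2).trace)/2

/-- Cartan's angular invariant. -/
def cartan (z1 z2 z3 : Vec4) : ℝ :=
  Complex.arg (-(hermForm z1 z2 * hermForm z2 z3 * hermForm z3 z1))

/-- The diagonal matrix `E(κ,ψ)`. -/
def Emat (κ : ℂ) (ψ : ℝ) : Mat4 :=
  Matrix.diagonal
    ![Complex.exp κ,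
      Complex.exp (-((ψ : ℂ) * Complex.I) + (conj κ - κ)/2),
      Complex.exp ((ψ : ℂ) * Complex.I + (conj κ - κ)/2),
      Complex.exp (-(conj κ))]

/-- Anti-holomorphic isometric involution `z ↦ M·conj(z)` of `ℂ^{3,1}`. -/
def AntiHolInv (M : Mat4) : Prop :=
  M * (M.map (starRingEnd ℂ)) = 1 ∧
  ∀ z w : Vec4, hermForm (M.mulVec (star z)) (M.mulVec (star w)) = conj (hermForm z w)

/-!
Rescale each quadruple so that `⟨z_j, z₁⟩ = 1` for `j ≠ 1`. The three cross-ratios are then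
quotients of the remaining pairings `⟨z_j, z_k⟩` (`j, k ≠ 1`), so equal cross-ratios make these
pairings of the two quadruples proportional, with a real factor `c`. For such a normalized null
triple `z₁, z₂, z_j` one has `Re ⟨z_j, z₂⟩ ≤ 0`, with equality exactly when `z_j` lies on the
complex line spanned by `z₁, z₂`; a negative `c` would put both `z₃` and `z₄` on that line and make
`𝕏₁` real. So `c > 0`, and rescaling by `√c` makes the two Gram matrices equal. Families with equal
Gram matrices that contain a hyperbolic pair and span at least three dimensions (which a non-real
`𝕏₁` guarantees) differ by an isometry; in the three-dimensional case, first complete both families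
by a unit normal vector. A scalar multiple of that isometry has determinant `1`.
-/

section HermForm

variable (x y z w : Vec4) (a : ℂ)

@[simp] lemma hermForm_add_left : hermForm (x + y) w = hermForm x w + hermForm y w := by
  simp only [hermForm, Pi.add_apply]; ring

@[simp] lemma hermForm_add_right : hermForm z (x + y) = hermForm z x + hermForm z y := by
  simp only [hermForm, Pi.add_apply, map_add]; ring

@[simp] lemma hermForm_sub_left : hermForm (x - y) w = hermForm x w - hermForm y w := by
  simp only [hermForm, Pi.sub_apply]; ring

@[simp] lemma hermForm_sub_right : hermForm z (x - y) = hermForm z x - hermForm z y := by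
  simp only [hermForm, Pi.sub_apply, map_sub]; ring

@[simp] lemma hermForm_smul_left : hermForm (a • z) w = a * hermForm z w := by
  simp only [hermForm, Pi.smul_apply, smul_eq_mul]; ring

@[simp] lemma hermForm_smul_right : hermForm z (a • w) = conj a * hermForm z w := by
  simp only [hermForm, Pi.smul_apply, smul_eq_mul, map_mul]; ring

@[simp] lemma hermForm_zero_left : hermForm 0 w = 0 := by simp [hermForm]

@[simp] lemma hermForm_zero_right : hermForm z 0 = 0 := by simp [hermForm]

lemma conj_hermForm : conj (hermForm z w) = hermForm w z := by
  simp only [hermForm, map_add, map_mul, conj_conj]; ring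

lemma hermForm_eq_zero_comm {z w : Vec4} : hermForm z w = 0 ↔ hermForm w z = 0 := by
  rw [← conj_hermForm, map_eq_zero]

lemma ofReal_re_hermForm_self : ((hermForm z z).re : ℂ) = hermForm z z :=
  conj_eq_iff_re.mp (conj_hermForm z z)

lemma hermForm_sum_left {ι : Type*} (s : Finset ι) (f : ι → Vec4) :
    hermForm (∑ i ∈ s, f i) w = ∑ i ∈ s, hermForm (f i) w := by
  simp only [hermForm, Finset.sum_apply, Finset.sum_mul, ← Finset.sum_add_distrib]

lemma hermForm_sum_right {ι : Type*} (s : Finset ι) (f : ι → Vec4) :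
    hermForm z (∑ i ∈ s, f i) = ∑ i ∈ s, hermForm z (f i) := by
  rw [← conj_hermForm, hermForm_sum_left, map_sum]
  simp only [conj_hermForm]

lemma hermForm_eq_dotProduct : hermForm z w = star (Hmat *ᵥ w) ⬝ᵥ z := by
  simp [hermForm, Hmat, dotProduct, Fin.sum_univ_four, mul_comm]

end HermForm

lemma hermForm_self_mul_eq_of_null {v p : Vec4} (hv : hermForm v v = 0) (hp : hermForm p v = 0) :
    hermForm p p * (v 3 * conj (v 3)) =
      (p 1 * v 3 - p 3 * v 1) * conj (p 1 * v 3 - p 3 * v 1) +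
        (p 2 * v 3 - p 3 * v 2) * conj (p 2 * v 3 - p 3 * v 2) := by
  have hp' := congrArg conj hp
  simp only [hermForm, map_add, map_mul, conj_conj, map_zero] at hv hp hp'
  simp only [hermForm, map_sub, map_mul]
  linear_combination v 3 * conj (p 3) * hp + p 3 * conj (v 3) * hp' - p 3 * conj (p 3) * hv

lemma re_hermForm_self_nonneg_and_of_apply_three_ne_zero {v p : Vec4} (hv : hermForm v v = 0)
    (hv3 : v 3 ≠ 0) (hp : hermForm p v = 0) :
    0 ≤ (hermForm p p).re ∧ ((hermForm p p).re = 0 → ∃ c : ℂ, p = c • v) := by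
  have key : (hermForm p p).re * normSq (v 3) =
      normSq (p 1 * v 3 - p 3 * v 1) + normSq (p 2 * v 3 - p 3 * v 2) := by
    have h := hermForm_self_mul_eq_of_null hv hp
    rw [← ofReal_re_hermForm_self p, mul_conj, mul_conj, mul_conj] at h
    exact_mod_cast h
  have h3 : 0 < normSq (v 3) := normSq_pos.mpr hv3
  refine ⟨nonneg_of_mul_nonneg_left (key ▸ add_nonneg (normSq_nonneg _) (normSq_nonneg _)) h3,
    fun hpp => ⟨p 3 / v 3, ?_⟩⟩
  rw [hpp, zero_mul] at key
  have h1 : p 1 * v 3 = p 3 * v 1 := sub_eq_zero.mp <| normSq_eq_zero.mp <| by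
    nlinarith [normSq_nonneg (p 1 * v 3 - p 3 * v 1), normSq_nonneg (p 2 * v 3 - p 3 * v 2)]
  have h2 : p 2 * v 3 = p 3 * v 2 := sub_eq_zero.mp <| normSq_eq_zero.mp <| by
    nlinarith [normSq_nonneg (p 1 * v 3 - p 3 * v 1), normSq_nonneg (p 2 * v 3 - p 3 * v 2)]
  have h0 : conj (v 3) * (p 0 * v 3 - p 3 * v 0) = 0 := by
    simp only [hermForm] at hv hp
    linear_combination v 3 * hp - conj (v 1) * h1 - conj (v 2) * h2 - p 3 * hv
  have h0 := sub_eq_zero.mp ((mul_eq_zero.mp h0).resolve_left (by simpa using hv3))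
  ext i
  fin_cases i <;>
    simp only [Fin.reduceFinMk, Fin.isValue, Pi.smul_apply, smul_eq_mul] <;> field_simp
  exacts [h0, h1, h2]

lemma hermForm_comp_swap (z w : Vec4) :
    hermForm (z ∘ Equiv.swap 0 3) (w ∘ Equiv.swap 0 3) = hermForm z w := by
  simp only [hermForm, Function.comp_apply, Equiv.swap_apply_left, Equiv.swap_apply_right,
    ne_eq, Fin.reduceEq, not_false_eq_true, Equiv.swap_apply_of_ne_of_ne]
  ring

lemma apply_three_ne_zero_or_apply_zero_ne_zero {v : Vec4} (hv : hermForm v v = 0) (hv0 : v ≠ 0) :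
    v 3 ≠ 0 ∨ v 0 ≠ 0 := by
  by_contra! h
  apply hv0
  have hv' := congrArg re hv
  simp only [hermForm, h.1, h.2, map_zero, mul_zero, zero_add, add_zero, mul_conj,
    add_re, ofReal_re, zero_re] at hv'
  have h1 : v 1 = 0 := normSq_eq_zero.mp (by nlinarith [normSq_nonneg (v 1), normSq_nonneg (v 2)])
  have h2 : v 2 = 0 := normSq_eq_zero.mp (by nlinarith [normSq_nonneg (v 1), normSq_nonneg (v 2)])
  ext i; fin_cases i <;> simp [h.1, h.2, h1, h2]

lemma re_hermForm_self_nonneg_and_of_orthogonal_null {v p : Vec4} (hv : hermForm v v = 0)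
    (hv0 : v ≠ 0) (hp : hermForm p v = 0) :
    0 ≤ (hermForm p p).re ∧ ((hermForm p p).re = 0 → ∃ c : ℂ, p = c • v) := by
  rcases apply_three_ne_zero_or_apply_zero_ne_zero hv hv0 with hv3 | hv0
  · exact re_hermForm_self_nonneg_and_of_apply_three_ne_zero hv hv3 hp
  · have h := re_hermForm_self_nonneg_and_of_apply_three_ne_zero (v := v ∘ Equiv.swap 0 3)
      (p := p ∘ Equiv.swap 0 3) (by rwa [hermForm_comp_swap]) (by simpa using hv0)
      (by rwa [hermForm_comp_swap])
    rw [hermForm_comp_swap] at h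
    refine ⟨h.1, fun hpp => ?_⟩
    obtain ⟨c, hc⟩ := h.2 hpp
    exact ⟨c, funext fun i => by simpa using congrFun hc (Equiv.swap 0 3 i)⟩

lemma re_hermForm_self_nonneg_of_orthogonal_null {v p : Vec4} (hv : hermForm v v = 0)
    (hv0 : v ≠ 0) (hp : hermForm p v = 0) : 0 ≤ (hermForm p p).re :=
  (re_hermForm_self_nonneg_and_of_orthogonal_null hv hv0 hp).1

lemma exists_eq_smul_of_orthogonal_null {v p : Vec4} (hv : hermForm v v = 0) (hv0 : v ≠ 0)
    (hp : hermForm p v = 0) (hpp : (hermForm p p).re = 0) : ∃ c : ℂ, p = c • v :=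
  (re_hermForm_self_nonneg_and_of_orthogonal_null hv hv0 hp).2 hpp

lemma hermForm_ne_zero_of_forall_ne_smul {z w : Vec4} (hz : hermForm z z = 0)
    (hw : hermForm w w = 0) (hw0 : w ≠ 0) (h : ∀ c : ℂ, z ≠ c • w) : hermForm z w ≠ 0 := by
  intro hzw
  obtain ⟨c, hc⟩ := exists_eq_smul_of_orthogonal_null hw hw0 hzw (by simp [hz])
  exact h c hc

lemma left_ne_zero_of_hermForm_ne_zero {z w : Vec4} (h : hermForm z w ≠ 0) : z ≠ 0 := by
  rintro rfl; simp at h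

lemma right_ne_zero_of_hermForm_ne_zero {z w : Vec4} (h : hermForm z w ≠ 0) : w ≠ 0 := by
  rintro rfl; simp at h

lemma eq_zero_of_null_of_orthogonal_pair {t v₀ v₁ : Vec4} (ht : hermForm t t = 0)
    (hv₀ : hermForm v₀ v₀ = 0) (h₀₁ : hermForm v₀ v₁ ≠ 0) (ht₀ : hermForm t v₀ = 0)
    (ht₁ : hermForm t v₁ = 0) : t = 0 := by
  obtain ⟨c, rfl⟩ := exists_eq_smul_of_orthogonal_null hv₀
    (left_ne_zero_of_hermForm_ne_zero h₀₁) ht₀ (by simp [ht])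
  simp only [hermForm_smul_left, mul_eq_zero, h₀₁, or_false] at ht₁
  simp [ht₁]

lemma gram_apply (u : Fin 4 → Vec4) (i j : Fin 4) :
    ((Matrix.of u)ᵀᴴ * Hmat * (Matrix.of u)ᵀ) i j = hermForm (u j) (u i) := by
  simp only [Hmat, hermForm, Matrix.mul_apply, Fin.sum_univ_four, conjTranspose_apply,
    transpose_apply, of_apply, RCLike.star_def, cons_val', cons_val_fin_one, cons_val_zero,
    cons_val_one, cons_val, mul_zero, add_zero, mul_one, zero_add]
  ring

lemma exists_isometry_of_linearIndependent {u v : Fin 4 → Vec4}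
    (hG : ∀ i j, hermForm (u i) (u j) = hermForm (v i) (v j)) (hu : LinearIndependent ℂ u) :
    ∃ A : Mat4, Aᴴ * Hmat * A = Hmat ∧ ∀ j, A *ᵥ u j = v j := by
  set W := (Matrix.of u)ᵀ
  set V := (Matrix.of v)ᵀ
  have hW : IsUnit W.det := (Matrix.isUnit_iff_isUnit_det W).mp
    (Matrix.linearIndependent_cols_iff_isUnit.mp hu)
  have hWV : Wᴴ * Hmat * W = Vᴴ * Hmat * V := by
    ext i j; rw [gram_apply, gram_apply, hG]
  refine ⟨V * W⁻¹, ?_, fun j => ?_⟩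
  · calc (V * W⁻¹)ᴴ * Hmat * (V * W⁻¹) = (W⁻¹)ᴴ * (Vᴴ * Hmat * V) * W⁻¹ := by
          simp only [conjTranspose_mul, Matrix.mul_assoc]
      _ = (W * W⁻¹)ᴴ * Hmat * (W * W⁻¹) := by
          simp only [← hWV, conjTranspose_mul, Matrix.mul_assoc]
      _ = Hmat := by simp [Matrix.mul_nonsing_inv _ hW]
  · change (V * W⁻¹) *ᵥ W.col j = V.col j
    rw [← mulVec_single_one, ← mulVec_single_one, mulVec_mulVec, Matrix.mul_assoc,
      Matrix.nonsing_inv_mul _ hW, Matrix.mul_one]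

lemma sum_smul_eq_zero_of_gram_eq {ι : Type*} [Fintype ι] {u v : ι → Vec4}
    (hG : ∀ i j, hermForm (u i) (u j) = hermForm (v i) (v j)) {i₀ i₁ : ι}
    (hv₀ : hermForm (v i₀) (v i₀) = 0) (h₀₁ : hermForm (v i₀) (v i₁) ≠ 0) {c : ι → ℂ}
    (hc : ∑ i, c i • u i = 0) : ∑ i, c i • v i = 0 := by
  have ht : ∀ k, hermForm (∑ i, c i • v i) (v k) = 0 := fun k => by
    simpa [hermForm_sum_left, hG] using congrArg (hermForm · (u k)) hc
  refine eq_zero_of_null_of_orthogonal_pair ?_ hv₀ h₀₁ (ht i₀) (ht i₁)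
  conv_lhs => rw [hermForm_sum_right]
  simp [ht]

lemma exists_ne_zero_forall_hermForm_eq_zero (u : Fin 3 → Vec4) :
    ∃ m : Vec4, m ≠ 0 ∧ ∀ i, hermForm m (u i) = 0 := by
  let f := Matrix.mulVecLin (Matrix.of fun i => star (Hmat *ᵥ u i))
  obtain ⟨m, hm, hm0⟩ := Submodule.exists_mem_ne_zero_of_ne_bot
    (LinearMap.ker_ne_bot_of_finrank_lt (f := f) (by simp))
  exact ⟨m, hm0, fun i => (hermForm_eq_dotProduct _ _).trans (congrFun hm i)⟩

lemma exists_unit_orthogonal {u₀ u₁ : Vec4} (u₂ : Vec4) (h₀ : hermForm u₀ u₀ = 0)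
    (h₀₁ : hermForm u₀ u₁ ≠ 0) :
    ∃ n : Vec4, hermForm n u₀ = 0 ∧ hermForm n u₁ = 0 ∧ hermForm n u₂ = 0 ∧ hermForm n n = 1 := by
  obtain ⟨m, hm0, hm⟩ := exists_ne_zero_forall_hermForm_eq_zero ![u₀, u₁, u₂]
  have hmu₀ : hermForm m u₀ = 0 := hm 0
  have hmu₁ : hermForm m u₁ = 0 := hm 1
  have hmu₂ : hermForm m u₂ = 0 := hm 2
  have hu₀ := left_ne_zero_of_hermForm_ne_zero h₀₁
  have hpos : 0 < (hermForm m m).re := by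
    refine (re_hermForm_self_nonneg_of_orthogonal_null h₀ hu₀ hmu₀).lt_of_ne' fun hmm => hm0 ?_
    obtain ⟨c, rfl⟩ := exists_eq_smul_of_orthogonal_null h₀ hu₀ hmu₀ hmm
    simp_all
  set s := Real.sqrt (hermForm m m).re
  have hs : (s : ℂ) * s = hermForm m m := by
    rw [← ofReal_mul, Real.mul_self_sqrt hpos.le, ofReal_re_hermForm_self]
  refine ⟨(s : ℂ)⁻¹ • m, by simp [hmu₀], by simp [hmu₁], by simp [hmu₂], ?_⟩
  have : (s : ℂ) ≠ 0 := ofReal_ne_zero.mpr (Real.sqrt_pos.mpr hpos).ne'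
  simp only [hermForm_smul_left, hermForm_smul_right, map_inv₀, conj_ofReal, ← hs]
  field_simp

lemma linearIndependent_of_notMem_span {u₀ u₁ u₂ : Vec4} (h₀ : hermForm u₀ u₀ = 0)
    (h₀₁ : hermForm u₀ u₁ ≠ 0) (h₂ : u₂ ∉ Submodule.span ℂ {u₀, u₁}) :
    LinearIndependent ℂ ![u₀, u₁, u₂] := by
  rw [Fintype.linearIndependent_iff]
  intro g hg
  simp only [Fin.sum_univ_three, Matrix.cons_val_zero, Matrix.cons_val_one,
    Matrix.cons_val_two, Matrix.head_cons, Matrix.tail_cons] at hg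
  have hg₂ : g 2 = 0 := by
    by_contra hg₂
    refine h₂ (Submodule.mem_span_pair.mpr ⟨-(g 2)⁻¹ * g 0, -(g 2)⁻¹ * g 1, ?_⟩)
    calc (-(g 2)⁻¹ * g 0) • u₀ + (-(g 2)⁻¹ * g 1) • u₁
        = -((g 2)⁻¹ • (g 0 • u₀ + g 1 • u₁)) := by module
      _ = u₂ := by
        rw [eq_neg_of_add_eq_zero_left hg, smul_neg, neg_neg, smul_smul, inv_mul_cancel₀ hg₂,
          one_smul]
  rw [hg₂, zero_smul, add_zero] at hg
  have h₁₀ : hermForm u₁ u₀ ≠ 0 := fun h => h₀₁ (hermForm_eq_zero_comm.mpr h)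
  have hg₁ : g 1 = 0 := by
    simpa [h₀, h₁₀] using congrArg (hermForm · u₀) hg
  rw [hg₁, zero_smul, add_zero] at hg
  have hg₀ : g 0 = 0 := by
    simpa [h₀₁] using congrArg (hermForm · u₁) hg
  intro i
  fin_cases i <;> assumption

lemma gram_eq_of_unit_orthogonal {u v : Fin 4 → Vec4}
    (hG : ∀ i j, hermForm (u i) (u j) = hermForm (v i) (v j)) {n n' : Vec4}
    (hn₀ : hermForm n (u 0) = 0) (hn₁ : hermForm n (u 1) = 0) (hn₂ : hermForm n (u 2) = 0)
    (hnn : hermForm n n = 1) (hn₀' : hermForm n' (v 0) = 0) (hn₁' : hermForm n' (v 1) = 0)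
    (hn₂' : hermForm n' (v 2) = 0) (hnn' : hermForm n' n' = 1) (i j : Fin 4) :
    hermForm (![u 0, u 1, u 2, n] i) (![u 0, u 1, u 2, n] j) =
      hermForm (![v 0, v 1, v 2, n'] i) (![v 0, v 1, v 2, n'] j) := by
  have h := @hermForm_eq_zero_comm
  fin_cases i <;> fin_cases j <;> simp [hG, hn₀, hn₁, hn₂, hnn, hn₀', hn₁', hn₂', hnn',
    h.mp hn₀, h.mp hn₁, h.mp hn₂, h.mp hn₀', h.mp hn₁', h.mp hn₂']

lemma linearIndependent_of_unit_orthogonal {u₀ u₁ u₂ n : Vec4}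
    (hu : LinearIndependent ℂ ![u₀, u₁, u₂]) (hn₀ : hermForm n u₀ = 0)
    (hn₁ : hermForm n u₁ = 0) (hn₂ : hermForm n u₂ = 0) (hnn : hermForm n n = 1) :
    LinearIndependent ℂ ![u₀, u₁, u₂, n] := by
  rw [Fintype.linearIndependent_iff]
  intro g hg
  simp only [Fin.sum_univ_four, Matrix.cons_val_zero, Matrix.cons_val_one,
    Matrix.cons_val_two, Matrix.cons_val_three, Matrix.head_cons, Matrix.tail_cons] at hg
  have hg₃ : g 3 = 0 := by
    simpa [hnn, hermForm_eq_zero_comm.mp hn₀, hermForm_eq_zero_comm.mp hn₁,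
      hermForm_eq_zero_comm.mp hn₂] using congrArg (hermForm · n) hg
  have := Fintype.linearIndependent_iff.mp hu ![g 0, g 1, g 2]
    (by simpa [Fin.sum_univ_three, hg₃] using hg)
  intro i
  fin_cases i
  exacts [this 0, this 1, this 2, hg₃]

lemma exists_isometry_of_notMem_span {u v : Fin 4 → Vec4}
    (hG : ∀ i j, hermForm (u i) (u j) = hermForm (v i) (v j)) (h₀ : hermForm (u 0) (u 0) = 0)
    (h₀₁ : hermForm (u 0) (u 1) ≠ 0) (h₂ : u 2 ∉ Submodule.span ℂ {u 0, u 1}) :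
    ∃ A : Mat4, Aᴴ * Hmat * A = Hmat ∧ ∀ j, A *ᵥ u j = v j := by
  by_cases hu : LinearIndependent ℂ u
  · exact exists_isometry_of_linearIndependent hG hu
  have hli := linearIndependent_of_notMem_span h₀ h₀₁ h₂
  obtain ⟨n, hn₀, hn₁, hn₂, hnn⟩ := exists_unit_orthogonal (u 2) h₀ h₀₁
  rw [hG] at h₀ h₀₁
  obtain ⟨n', hn₀', hn₁', hn₂', hnn'⟩ := exists_unit_orthogonal (v 2) h₀ h₀₁
  obtain ⟨A, hA, hAu⟩ := exists_isometry_of_linearIndependent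
    (gram_eq_of_unit_orthogonal hG hn₀ hn₁ hn₂ hnn hn₀' hn₁' hn₂' hnn')
    (linearIndependent_of_unit_orthogonal hli hn₀ hn₁ hn₂ hnn)
  refine ⟨A, hA, ?_⟩
  -- the relation expressing `u 3` through `u 0, u 1, u 2` also holds for `v`
  obtain ⟨g, hg, i, hi⟩ := Fintype.not_linearIndependent_iff.mp hu
  have hgv := sum_smul_eq_zero_of_gram_eq hG h₀ h₀₁ hg
  have hg₃ : g 3 ≠ 0 := by
    intro hg₃
    have := Fintype.linearIndependent_iff.mp hli ![g 0, g 1, g 2]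
      (by simpa [Fin.sum_univ_four, Fin.sum_univ_three, hg₃] using hg)
    fin_cases i
    exacts [hi (this 0), hi (this 1), hi (this 2), hi hg₃]
  have hA₃ : g 3 • (A *ᵥ u 3 - v 3) = 0 := by
    have hAg := congrArg (A *ᵥ ·) hg
    simp only [Fin.sum_univ_four, mulVec_add, mulVec_smul, mulVec_zero] at hAg hgv
    rw [show A *ᵥ u 0 = v 0 from hAu 0, show A *ᵥ u 1 = v 1 from hAu 1,
      show A *ᵥ u 2 = v 2 from hAu 2] at hAg
    linear_combination (norm := module) hAg - hgv
  intro j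
  fin_cases j
  exacts [hAu 0, hAu 1, hAu 2, sub_eq_zero.mp ((smul_eq_zero.mp hA₃).resolve_left hg₃)]

lemma exists_isometry_of_notMem_span_or {u v : Fin 4 → Vec4}
    (hG : ∀ i j, hermForm (u i) (u j) = hermForm (v i) (v j)) (h₀ : hermForm (u 0) (u 0) = 0)
    (h₀₁ : hermForm (u 0) (u 1) ≠ 0)
    (h : u 2 ∉ Submodule.span ℂ {u 0, u 1} ∨ u 3 ∉ Submodule.span ℂ {u 0, u 1}) :
    ∃ A : Mat4, Aᴴ * Hmat * A = Hmat ∧ ∀ j, A *ᵥ u j = v j := by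
  rcases h with h₂ | h₃
  · exact exists_isometry_of_notMem_span hG h₀ h₀₁ h₂
  · obtain ⟨A, hA, hAu⟩ := exists_isometry_of_notMem_span (u := u ∘ Equiv.swap 2 3)
      (v := v ∘ Equiv.swap 2 3) (fun i j => hG _ _) h₀ h₀₁ h₃
    exact ⟨A, hA, fun j => by simpa using hAu (Equiv.swap 2 3 j)⟩

lemma det_Hmat : Hmat.det = -1 := by
  norm_num [Hmat, Matrix.det_succ_row_zero, Fin.sum_univ_succ]
  simp

lemma exists_smul_isSU31 {A : Mat4} (hA : Aᴴ * Hmat * A = Hmat) :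
    ∃ ω : ℂ, ω ≠ 0 ∧ isSU31 (ω • A) := by
  have hdet : conj A.det * A.det = 1 := by
    have h := congrArg det hA
    rw [det_mul, det_mul, det_conjTranspose, det_Hmat] at h
    rw [← starRingEnd_apply] at h
    linear_combination -h
  have hdet0 : A.det ≠ 0 := right_ne_zero_of_mul_eq_one hdet
  obtain ⟨ω, hω⟩ := IsAlgClosed.exists_pow_nat_eq A.det⁻¹ (n := 4) (by norm_num)
  have hω0 : ω ≠ 0 := by
    rintro rfl
    simp only [ne_eq, OfNat.ofNat_ne_zero, not_false_eq_true, zero_pow, zero_eq_inv] at hω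
    exact hdet0 hω.symm
  have hωω : conj ω * ω = 1 := by
    have h1 : normSq A.det = 1 := by exact_mod_cast (normSq_eq_conj_mul_self).trans hdet
    have h4 : normSq ω ^ 4 = 1 := by rw [← map_pow, hω, map_inv₀, h1, inv_one]
    rw [← normSq_eq_conj_mul_self, (pow_eq_one_iff_of_nonneg (normSq_nonneg ω) (by norm_num)).mp h4,
      ofReal_one]
  refine ⟨ω, hω0, ?_, ?_⟩
  · rw [conjTranspose_smul, Matrix.smul_mul, Matrix.smul_mul, Matrix.mul_smul, smul_smul, hA,
      ← starRingEnd_apply, hωω, one_smul]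
  · rw [det_smul, Fintype.card_fin, hω, inv_mul_cancel₀ hdet0]

lemma re_hermForm_nonpos_and_eq_zero_iff {w₀ w₁ w₂ : Vec4} (h₀ : hermForm w₀ w₀ = 0)
    (h₁ : hermForm w₁ w₁ = 0) (h₂ : hermForm w₂ w₂ = 0) (h₁₀ : hermForm w₁ w₀ = 1)
    (h₂₀ : hermForm w₂ w₀ = 1) :
    (hermForm w₂ w₁).re ≤ 0 ∧ ((hermForm w₂ w₁).re = 0 ↔ w₂ ∈ Submodule.span ℂ {w₀, w₁}) := by
  have hw₀ : w₀ ≠ 0 := right_ne_zero_of_hermForm_ne_zero (h₁₀ ▸ one_ne_zero)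
  have h₀₁ : hermForm w₀ w₁ = 1 := by rw [← conj_hermForm, h₁₀, map_one]
  have h₀₂ : hermForm w₀ w₂ = 1 := by rw [← conj_hermForm, h₂₀, map_one]
  -- the component of `w₂` orthogonal to `w₀` and `w₁`
  set p := w₂ - w₁ - hermForm w₂ w₁ • w₀
  have hp₀ : hermForm p w₀ = 0 := by simp [p, h₀, h₁₀, h₂₀]
  have hpp : (hermForm p p).re = -2 * (hermForm w₂ w₁).re := by
    simp only [p, hermForm_sub_left, hermForm_sub_right, hermForm_smul_left, hermForm_smul_right,
      h₀, h₁, h₂, h₁₀, h₂₀, h₀₁, h₀₂, ← conj_hermForm w₂ w₁]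
    simp only [zero_sub, mul_one, sub_zero, sub_self, mul_zero, sub_re, neg_re, conj_re, neg_mul]
    ring
  refine ⟨by linarith [re_hermForm_self_nonneg_of_orthogonal_null h₀ hw₀ hp₀], fun hre => ?_,
    fun hmem => ?_⟩
  · obtain ⟨c, hc⟩ := exists_eq_smul_of_orthogonal_null h₀ hw₀ hp₀ (by rw [hpp, hre, mul_zero])
    refine Submodule.mem_span_pair.mpr ⟨hermForm w₂ w₁ + c, 1, ?_⟩
    rw [add_smul, ← hc]
    module
  · obtain ⟨a, b, rfl⟩ := Submodule.mem_span_pair.mp hmem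
    obtain rfl : b = 1 := by simpa [h₀, h₁₀] using h₂₀
    simp only [hermForm_add_left, hermForm_add_right, hermForm_smul_left, hermForm_smul_right,
      h₀, h₁, h₀₁, h₁₀, map_one] at h₂ ⊢
    have := congrArg re h₂
    simp only [mul_zero, mul_one, zero_add, add_zero, one_mul, add_re, conj_re, zero_re] at this ⊢
    linarith

lemma exists_real_of_div_eq {x y z x' y' z' : ℂ} (hx : x ≠ 0) (hy : y ≠ 0) (hz : z ≠ 0)
    (hx' : x' ≠ 0) (hy' : y' ≠ 0) (h₁ : y' / x' = y / x) (h₂ : z' / conj x' = z / conj x)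
    (h₃ : z' / y' = z / y) : ∃ c : ℝ, x' = c * x ∧ y' = c * y ∧ z' = c * z := by
  set k := x' / x
  have hxk : x' = k * x := (div_mul_cancel₀ x' hx).symm
  have hyk : y' = k * y := by
    rw [div_eq_div_iff hx' hx] at h₁
    rw [div_mul_eq_mul_div, eq_div_iff hx]
    linear_combination h₁
  have hzk : z' = k * z := by
    rw [div_eq_div_iff hy' hy, hyk] at h₃
    exact mul_right_cancel₀ hy (by linear_combination h₃)
  have hk : conj k = k := by
    have hcx : conj x ≠ 0 := (_root_.map_ne_zero _).mpr hx
    rw [div_eq_div_iff ((_root_.map_ne_zero _).mpr hx') hcx, hzk, hxk, map_mul] at h₂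
    exact mul_left_cancel₀ (mul_ne_zero hz hcx) (by linear_combination -h₂)
  refine ⟨k.re, ?_⟩
  rw [conj_eq_iff_re.mp hk]
  exact ⟨hxk, hyk, hzk⟩

lemma crossRatios_of_normalized {w : Fin 4 → Vec4}
    (hw : ∀ j, j ≠ 0 → hermForm (w j) (w 0) = 1) :
    crossRatio (w 0) (w 1) (w 2) (w 3) = hermForm (w 3) (w 1) / hermForm (w 2) (w 1) ∧
      crossRatio (w 0) (w 2) (w 1) (w 3) = hermForm (w 3) (w 2) / conj (hermForm (w 2) (w 1)) ∧
      crossRatio (w 1) (w 2) (w 0) (w 3) = hermForm (w 3) (w 2) / hermForm (w 3) (w 1) := by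
  have h₀ : ∀ j, j ≠ 0 → hermForm (w 0) (w j) = 1 := fun j hj => by
    rw [← conj_hermForm, hw j hj, map_one]
  simp [crossRatio, hw, h₀, conj_hermForm]

lemma crossRatio_im_eq_zero_of_re_eq_zero {w : Fin 4 → Vec4}
    (hw : ∀ j, j ≠ 0 → hermForm (w j) (w 0) = 1) (h₂ : (hermForm (w 2) (w 1)).re = 0)
    (h₃ : (hermForm (w 3) (w 1)).re = 0) : (crossRatio (w 0) (w 1) (w 2) (w 3)).im = 0 := by
  simp [(crossRatios_of_normalized hw).1, div_im, h₂, h₃]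

lemma notMem_span_or_of_crossRatio_im_ne_zero {w : Fin 4 → Vec4}
    (hnull : ∀ i, hermForm (w i) (w i) = 0) (hw : ∀ j, j ≠ 0 → hermForm (w j) (w 0) = 1)
    (hX : (crossRatio (w 0) (w 1) (w 2) (w 3)).im ≠ 0) :
    w 2 ∉ Submodule.span ℂ {w 0, w 1} ∨ w 3 ∉ Submodule.span ℂ {w 0, w 1} := by
  have h := fun j (hj : j ≠ 0) => (re_hermForm_nonpos_and_eq_zero_iff (hnull 0) (hnull 1)
    (hnull j) (hw 1 one_ne_zero) (hw j hj)).2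
  by_contra! hspan
  exact hX (crossRatio_im_eq_zero_of_re_eq_zero hw ((h 2 (by decide)).mpr hspan.1)
    ((h 3 (by decide)).mpr hspan.2))

lemma pos_of_hermForm_eq_mul {w w' : Fin 4 → Vec4} (hnull : ∀ i, hermForm (w i) (w i) = 0)
    (hnull' : ∀ i, hermForm (w' i) (w' i) = 0) (hw : ∀ j, j ≠ 0 → hermForm (w j) (w 0) = 1)
    (hw' : ∀ j, j ≠ 0 → hermForm (w' j) (w' 0) = 1)
    (hX : (crossRatio (w 0) (w 1) (w 2) (w 3)).im ≠ 0) {c : ℝ} (hc : c ≠ 0)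
    (h₂ : hermForm (w' 2) (w' 1) = c * hermForm (w 2) (w 1))
    (h₃ : hermForm (w' 3) (w' 1) = c * hermForm (w 3) (w 1)) : 0 < c := by
  refine hc.lt_or_gt.resolve_left fun hneg => hX ?_
  have hre : ∀ j, j ≠ 0 → hermForm (w' j) (w' 1) = c * hermForm (w j) (w 1) →
      (hermForm (w j) (w 1)).re = 0 := fun j hj h => by
    have hle := (re_hermForm_nonpos_and_eq_zero_iff (hnull 0) (hnull 1) (hnull j)
      (hw 1 one_ne_zero) (hw j hj)).1
    have hle' := (re_hermForm_nonpos_and_eq_zero_iff (hnull' 0) (hnull' 1) (hnull' j)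
      (hw' 1 one_ne_zero) (hw' j hj)).1
    rw [h, re_ofReal_mul] at hle'
    nlinarith
  exact crossRatio_im_eq_zero_of_re_eq_zero hw (hre 2 (by decide) h₂) (hre 3 (by decide) h₃)

lemma exists_pos_hermForm_eq_mul {w w' : Fin 4 → Vec4} (hnull : ∀ i, hermForm (w i) (w i) = 0)
    (hnull' : ∀ i, hermForm (w' i) (w' i) = 0) (hw : ∀ j, j ≠ 0 → hermForm (w j) (w 0) = 1)
    (hw' : ∀ j, j ≠ 0 → hermForm (w' j) (w' 0) = 1)
    (hne : ∀ i j, i ≠ j → hermForm (w i) (w j) ≠ 0)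
    (hne' : ∀ i j, i ≠ j → hermForm (w' i) (w' j) ≠ 0)
    (hX : (crossRatio (w 0) (w 1) (w 2) (w 3)).im ≠ 0)
    (he₁ : crossRatio (w' 0) (w' 1) (w' 2) (w' 3) = crossRatio (w 0) (w 1) (w 2) (w 3))
    (he₂ : crossRatio (w' 0) (w' 2) (w' 1) (w' 3) = crossRatio (w 0) (w 2) (w 1) (w 3))
    (he₃ : crossRatio (w' 1) (w' 2) (w' 0) (w' 3) = crossRatio (w 1) (w 2) (w 0) (w 3)) :
    ∃ c : ℝ, 0 < c ∧ hermForm (w' 2) (w' 1) = c * hermForm (w 2) (w 1) ∧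
      hermForm (w' 3) (w' 1) = c * hermForm (w 3) (w 1) ∧
      hermForm (w' 3) (w' 2) = c * hermForm (w 3) (w 2) := by
  obtain ⟨X₁, X₂, X₃⟩ := crossRatios_of_normalized hw
  obtain ⟨X₁', X₂', X₃'⟩ := crossRatios_of_normalized hw'
  obtain ⟨c, h₂, h₃, h₃₂⟩ := exists_real_of_div_eq (hne 2 1 (by decide)) (hne 3 1 (by decide))
    (hne 3 2 (by decide)) (hne' 2 1 (by decide)) (hne' 3 1 (by decide))
    (by rw [← X₁, ← X₁', he₁]) (by rw [← X₂, ← X₂', he₂]) (by rw [← X₃, ← X₃', he₃])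
  have hc : c ≠ 0 := by
    rintro rfl
    exact hne' 2 1 (by decide) (by simpa using h₂)
  exact ⟨c, pos_of_hermForm_eq_mul hnull hnull' hw hw' hX hc h₂ h₃, h₂, h₃, h₃₂⟩

lemma gram_eq_of_normalized {w v : Fin 4 → Vec4} (hnull : ∀ i, hermForm (w i) (w i) = 0)
    (hnull' : ∀ i, hermForm (v i) (v i) = 0) (hw : ∀ j, j ≠ 0 → hermForm (w j) (w 0) = 1)
    (hv : ∀ j, j ≠ 0 → hermForm (v j) (v 0) = 1)
    (h₂₁ : hermForm (v 2) (v 1) = hermForm (w 2) (w 1))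
    (h₃₁ : hermForm (v 3) (v 1) = hermForm (w 3) (w 1))
    (h₃₂ : hermForm (v 3) (v 2) = hermForm (w 3) (w 2)) (i j : Fin 4) :
    hermForm (w i) (w j) = hermForm (v i) (v j) := by
  have swap : ∀ {a b c d : Vec4}, hermForm a b = hermForm c d → hermForm b a = hermForm d c :=
    fun h => by rw [← conj_hermForm, h, conj_hermForm]
  fin_cases i <;> fin_cases j <;>
    simp [hnull, hnull', hw, hv, h₂₁, h₃₁, h₃₂, swap h₂₁, swap h₃₁, swap h₃₂,
      swap ((hw 1 one_ne_zero).trans (hv 1 one_ne_zero).symm),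
      swap ((hw 2 (by decide)).trans (hv 2 (by decide)).symm),
      swap ((hw 3 (by decide)).trans (hv 3 (by decide)).symm)]

lemma crossRatio_smul {a b c d : ℂ} (ha : a ≠ 0) (hb : b ≠ 0) (hc : c ≠ 0) (hd : d ≠ 0)
    (z₁ z₂ z₃ z₄ : Vec4) :
    crossRatio (a • z₁) (b • z₂) (c • z₃) (d • z₄) = crossRatio z₁ z₂ z₃ z₄ := by
  have h : c * conj a * (d * conj b) ≠ 0 := by simp [ha, hb, hc, hd]
  simp only [crossRatio, hermForm_smul_left, hermForm_smul_right]
  calc _ = c * conj a * (d * conj b) * (hermForm z₃ z₁ * hermForm z₄ z₂) /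
        (c * conj a * (d * conj b) * (hermForm z₄ z₁ * hermForm z₃ z₂)) := by ring
    _ = _ := mul_div_mul_left _ _ h

lemma exists_smul_normalized {z : Fin 4 → Vec4} (hne : ∀ j, j ≠ 0 → hermForm (z j) (z 0) ≠ 0) :
    ∃ a : Fin 4 → ℂ, (∀ j, a j ≠ 0) ∧ ∀ j, j ≠ 0 → hermForm (a j • z j) (a 0 • z 0) = 1 := by
  refine ⟨fun j => if j = 0 then 1 else (hermForm (z j) (z 0))⁻¹, fun j => ?_, fun j hj => ?_⟩
  · dsimp only
    split_ifs with h
    exacts [one_ne_zero, inv_ne_zero (hne j h)]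
  · simp [hj, inv_mul_cancel₀ (hne j hj)]

def IsometricUpToScalars (z z' : Fin 4 → Vec4) : Prop :=
  ∃ A : Mat4, Aᴴ * Hmat * A = Hmat ∧
    ∃ μ : Fin 4 → ℂ, (∀ j, μ j ≠ 0) ∧ ∀ j, A *ᵥ z j = μ j • z' j

lemma IsometricUpToScalars.of_smul {z z' : Fin 4 → Vec4} {a b : Fin 4 → ℂ} (ha : ∀ j, a j ≠ 0)
    (hb : ∀ j, b j ≠ 0) (h : IsometricUpToScalars (fun j => a j • z j) (fun j => b j • z' j)) :
    IsometricUpToScalars z z' := by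
  obtain ⟨A, hA, μ, hμ, hAz⟩ := h
  refine ⟨A, hA, fun j => (a j)⁻¹ * (μ j * b j),
    fun j => mul_ne_zero (inv_ne_zero (ha j)) (mul_ne_zero (hμ j) (hb j)), fun j => ?_⟩
  have := congrArg ((a j)⁻¹ • ·) (hAz j)
  simpa only [mulVec_smul, smul_smul, inv_mul_cancel₀ (ha j), one_smul] using this

theorem isometricUpToScalars_of_normalized {w w' : Fin 4 → Vec4}
    (hnull : ∀ i, hermForm (w i) (w i) = 0) (hnull' : ∀ i, hermForm (w' i) (w' i) = 0)
    (hw : ∀ j, j ≠ 0 → hermForm (w j) (w 0) = 1) (hw' : ∀ j, j ≠ 0 → hermForm (w' j) (w' 0) = 1)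
    (hne : ∀ i j, i ≠ j → hermForm (w i) (w j) ≠ 0)
    (hne' : ∀ i j, i ≠ j → hermForm (w' i) (w' j) ≠ 0)
    (hX : (crossRatio (w 0) (w 1) (w 2) (w 3)).im ≠ 0)
    (he₁ : crossRatio (w' 0) (w' 1) (w' 2) (w' 3) = crossRatio (w 0) (w 1) (w 2) (w 3))
    (he₂ : crossRatio (w' 0) (w' 2) (w' 1) (w' 3) = crossRatio (w 0) (w 2) (w 1) (w 3))
    (he₃ : crossRatio (w' 1) (w' 2) (w' 0) (w' 3) = crossRatio (w 1) (w 2) (w 0) (w 3)) :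
    IsometricUpToScalars w w' := by
  obtain ⟨c, hc, h₂₁, h₃₁, h₃₂⟩ :=
    exists_pos_hermForm_eq_mul hnull hnull' hw hw' hne hne' hX he₁ he₂ he₃
  -- rescaling `w'` by `√c` and `1/√c` turns the proportional pairings into equal ones
  set s : ℂ := (Real.sqrt c : ℂ)
  have hs : s ≠ 0 := ofReal_ne_zero.mpr (Real.sqrt_pos.mpr hc).ne'
  have hss : s * s = c := by rw [← ofReal_mul, Real.mul_self_sqrt hc.le]
  have hsc : conj s = s := conj_ofReal _
  set v : Fin 4 → Vec4 := ![s • w' 0, s⁻¹ • w' 1, s⁻¹ • w' 2, s⁻¹ • w' 3]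
  have hG := gram_eq_of_normalized (v := v) hnull
    (by intro i; fin_cases i <;> simp [v, hnull'])
    hw (by intro j hj; fin_cases j <;> simp [v, hw', hsc, hs] at hj ⊢)
    (by simp [v, h₂₁, hsc, ← hss]; field_simp) (by simp [v, h₃₁, hsc, ← hss]; field_simp)
    (by simp [v, h₃₂, hsc, ← hss]; field_simp)
  obtain ⟨A, hA, hAw⟩ := exists_isometry_of_notMem_span_or hG (hnull 0) (hne 0 1 (by decide))
    (notMem_span_or_of_crossRatio_im_ne_zero hnull hw hX)
  refine ⟨A, hA, ![s, s⁻¹, s⁻¹, s⁻¹], fun j => ?_, fun j => ?_⟩ <;> fin_cases j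
  all_goals first | simpa using hs | exact hAw _

theorem isometricUpToScalars_of_crossRatio_eq {z z' : Fin 4 → Vec4}
    (hnull : ∀ i, hermForm (z i) (z i) = 0) (hnull' : ∀ i, hermForm (z' i) (z' i) = 0)
    (hne : ∀ i j, i ≠ j → hermForm (z i) (z j) ≠ 0)
    (hne' : ∀ i j, i ≠ j → hermForm (z' i) (z' j) ≠ 0)
    (hX : (crossRatio (z 0) (z 1) (z 2) (z 3)).im ≠ 0)
    (he₁ : crossRatio (z' 0) (z' 1) (z' 2) (z' 3) = crossRatio (z 0) (z 1) (z 2) (z 3))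
    (he₂ : crossRatio (z' 0) (z' 2) (z' 1) (z' 3) = crossRatio (z 0) (z 2) (z 1) (z 3))
    (he₃ : crossRatio (z' 1) (z' 2) (z' 0) (z' 3) = crossRatio (z 1) (z 2) (z 0) (z 3)) :
    IsometricUpToScalars z z' := by
  obtain ⟨a, ha, hw⟩ := exists_smul_normalized fun j hj => hne j 0 hj
  obtain ⟨b, hb, hw'⟩ := exists_smul_normalized fun j hj => hne' j 0 hj
  refine .of_smul ha hb (isometricUpToScalars_of_normalized (by simp [hnull]) (by simp [hnull'])
    hw hw' (fun i j hij => by simp [ha, hne i j hij]) (fun i j hij => by simp [hb, hne' i j hij])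
    ?_ ?_ ?_ ?_) <;> simpa [crossRatio_smul, ha, hb]

lemma hermForm_ne_zero_of_pairwiseNotProp4 {z₁ z₂ z₃ z₄ : Vec4} (hz₂ : z₂ ≠ 0) (hz₃ : z₃ ≠ 0)
    (hz₄ : z₄ ≠ 0) (hn₁ : hermForm z₁ z₁ = 0) (hn₂ : hermForm z₂ z₂ = 0)
    (hn₃ : hermForm z₃ z₃ = 0) (hn₄ : hermForm z₄ z₄ = 0) (hp : PairwiseNotProp4 z₁ z₂ z₃ z₄)
    (i j : Fin 4) (hij : i ≠ j) :
    hermForm (![z₁, z₂, z₃, z₄] i) (![z₁, z₂, z₃, z₄] j) ≠ 0 := by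
  obtain ⟨h₁₂, h₁₃, h₁₄, h₂₃, h₂₄, h₃₄⟩ := hp
  have swap : ∀ {x y : Vec4}, hermForm x y ≠ 0 → hermForm y x ≠ 0 :=
    (not_congr hermForm_eq_zero_comm).mp
  have g₁₂ := hermForm_ne_zero_of_forall_ne_smul hn₁ hn₂ hz₂ h₁₂
  have g₁₃ := hermForm_ne_zero_of_forall_ne_smul hn₁ hn₃ hz₃ h₁₃
  have g₁₄ := hermForm_ne_zero_of_forall_ne_smul hn₁ hn₄ hz₄ h₁₄
  have g₂₃ := hermForm_ne_zero_of_forall_ne_smul hn₂ hn₃ hz₃ h₂₃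
  have g₂₄ := hermForm_ne_zero_of_forall_ne_smul hn₂ hn₄ hz₄ h₂₄
  have g₃₄ := hermForm_ne_zero_of_forall_ne_smul hn₃ hn₄ hz₄ h₃₄
  fin_cases i <;> fin_cases j <;> simp_all

theorem crossRatio_determines_quadruple_general (z1 z2 z3 z4 z1' z2' z3' z4' : Vec4)
    (hz2 : z2 ≠ 0) (hz3 : z3 ≠ 0) (hz4 : z4 ≠ 0)
    (hz2' : z2' ≠ 0) (hz3' : z3' ≠ 0) (hz4' : z4' ≠ 0)
    (hn1 : hermForm z1 z1 = 0) (hn2 : hermForm z2 z2 = 0)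
    (hn3 : hermForm z3 z3 = 0) (hn4 : hermForm z4 z4 = 0)
    (hn1' : hermForm z1' z1' = 0) (hn2' : hermForm z2' z2' = 0)
    (hn3' : hermForm z3' z3' = 0) (hn4' : hermForm z4' z4' = 0)
    (hp : PairwiseNotProp4 z1 z2 z3 z4) (hp' : PairwiseNotProp4 z1' z2' z3' z4')
    (hX1 : (crossRatio z1 z2 z3 z4).im ≠ 0)
    (he1 : crossRatio z1' z2' z3' z4' = crossRatio z1 z2 z3 z4)
    (he2 : crossRatio z1' z3' z2' z4' = crossRatio z1 z3 z2 z4)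
    (he3 : crossRatio z2' z3' z1' z4' = crossRatio z2 z3 z1 z4) :
    ∃ A : Mat4, isSU31 A ∧
      ∃ l1 l2 l3 l4 : ℂ, l1 ≠ 0 ∧ l2 ≠ 0 ∧ l3 ≠ 0 ∧ l4 ≠ 0 ∧
        A.mulVec z1 = l1 • z1' ∧ A.mulVec z2 = l2 • z2' ∧
        A.mulVec z3 = l3 • z3' ∧ A.mulVec z4 = l4 • z4' := by
  obtain ⟨A, hA, μ, hμ, hAz⟩ := isometricUpToScalars_of_crossRatio_eq (z := ![z1, z2, z3, z4])
    (z' := ![z1', z2', z3', z4']) (by simp [Fin.forall_fin_succ, *])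
    (by simp [Fin.forall_fin_succ, *])
    (hermForm_ne_zero_of_pairwiseNotProp4 hz2 hz3 hz4 hn1 hn2 hn3 hn4 hp)
    (hermForm_ne_zero_of_pairwiseNotProp4 hz2' hz3' hz4' hn1' hn2' hn3' hn4' hp') hX1 he1 he2 he3
  obtain ⟨ω, hω, hSU⟩ := exists_smul_isSU31 hA
  refine ⟨ω • A, hSU, ω * μ 0, ω * μ 1, ω * μ 2, ω * μ 3, mul_ne_zero hω (hμ 0),
    mul_ne_zero hω (hμ 1), mul_ne_zero hω (hμ 2), mul_ne_zero hω (hμ 3), ?_, ?_, ?_, ?_⟩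
  all_goals rw [smul_mulVec, mul_smul]
  exacts [congrArg _ (hAz 0), congrArg _ (hAz 1), congrArg _ (hAz 2), congrArg _ (hAz 3)]

/-- two quadruples of pairwise non-proportional null vectors with
the same (non-real) cross-ratios are equivalent under SU(3,1). -/
theorem crossRatio_determines_quadruple (z1 z2 z3 z4 z1' z2' z3' z4' : Vec4)
    (hz1 : z1 ≠ 0) (hz2 : z2 ≠ 0) (hz3 : z3 ≠ 0) (hz4 : z4 ≠ 0)
    (hz1' : z1' ≠ 0) (hz2' : z2' ≠ 0) (hz3' : z3' ≠ 0) (hz4' : z4' ≠ 0)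
    (hn1 : hermForm z1 z1 = 0) (hn2 : hermForm z2 z2 = 0)
    (hn3 : hermForm z3 z3 = 0) (hn4 : hermForm z4 z4 = 0)
    (hn1' : hermForm z1' z1' = 0) (hn2' : hermForm z2' z2' = 0)
    (hn3' : hermForm z3' z3' = 0) (hn4' : hermForm z4' z4' = 0)
    (hp : PairwiseNotProp4 z1 z2 z3 z4) (hp' : PairwiseNotProp4 z1' z2' z3' z4')
    (hX1 : (crossRatio z1 z2 z3 z4).im ≠ 0)
    (hX2 : (crossRatio z1 z3 z2 z4).im ≠ 0)
    (hX3 : (crossRatio z2 z3 z1 z4).im ≠ 0)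
    (he1 : crossRatio z1' z2' z3' z4' = crossRatio z1 z2 z3 z4)
    (he2 : crossRatio z1' z3' z2' z4' = crossRatio z1 z3 z2 z4)
    (he3 : crossRatio z2' z3' z1' z4' = crossRatio z2 z3 z1 z4) :
    ∃ A : Mat4, isSU31 A ∧
      ∃ l1 l2 l3 l4 : ℂ, l1 ≠ 0 ∧ l2 ≠ 0 ∧ l3 ≠ 0 ∧ l4 ≠ 0 ∧
        A.mulVec z1 = l1 • z1' ∧ A.mulVec z2 = l2 • z2' ∧
        A.mulVec z3 = l3 • z3' ∧ A.mulVec z4 = l4 • z4' :=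
  crossRatio_determines_quadruple_general z1 z2 z3 z4 z1' z2' z3' z4' hz2 hz3 hz4 hz2' hz3' hz4' hn1
    hn2 hn3 hn4 hn1' hn2' hn3' hn4' hp hp' hX1 he1 he2 he3
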